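/- arXiv:2108.08725 — 2 statements merged into one kernel-verified Lean document; each statement's English description precedes it below -/
import Mathlib

section
/- Let m ∈ (2,3) and let h : (0,∞) × (−∞,0] → ℝ be a smooth solution of ∂_s h(ξ,s) = (1/2)·∂²_ξ h(ξ,s) + (3/ξ)·∂_ξ h(ξ,s) + (3/ξ²)·h(ξ,s) such that |h(ξ,s)| ≤ ξ^{−m} for all ξ > 0 and s ≤ 0. Then h(ξ,s) = 0 for all ξ > 0 and s ≤ 0. -/
set_option maxHeartbeats 1000000
open Filter Set Topology

lemma aux_deriv_nonpos_left {f : ℝ → ℝ} {d x : ℝ} (hf : HasDerivAt f d x)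
    (hmin : ∀ᶠ y in 𝓝[<] x, f x ≤ f y) : d ≤ 0 := by
  have h2 : HasDerivWithinAt f d (Iio x) x := hf.hasDerivWithinAt
  rw [hasDerivWithinAt_iff_tendsto_slope] at h2
  have hIio : Iio x \ {x} = Iio x := by
    ext y; simp only [mem_diff, mem_Iio, mem_singleton_iff]
    exact ⟨fun h => h.1, fun h => ⟨h, ne_of_lt h⟩⟩
  rw [hIio] at h2
  refine le_of_tendsto h2 ?_
  filter_upwards [hmin, self_mem_nhdsWithin] with y hy hy'
  have hylt : y < x := hy'
  have : slope f x y = (f y - f x) / (y - x) := by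
    simp [slope_def_field]
  rw [this]
  apply div_nonpos_of_nonneg_of_nonpos <;> linarith

lemma aux_second_deriv_nonneg {f f' f'' : ℝ → ℝ} {x η : ℝ} (hη : 0 < η)
    (hd : ∀ y ∈ Ioo (x - η) (x + η), HasDerivAt f (f' y) y)
    (hd2 : ∀ y ∈ Ioo (x - η) (x + η), HasDerivAt f' (f'' y) y)
    (hc : ContinuousAt f'' x)
    (hmin : ∀ y ∈ Ioo (x - η) (x + η), f x ≤ f y) : 0 ≤ f'' x := by
  by_contra hneg
  push_neg at hneg
  have hxmem : x ∈ Ioo (x - η) (x + η) := by constructor <;> linarith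
  have hf'x : f' x = 0 := by
    have hloc : IsLocalMin f x := by
      have : Ioo (x - η) (x + η) ∈ 𝓝 x := Ioo_mem_nhds hxmem.1 hxmem.2
      exact Filter.eventually_of_mem this hmin
    have := hloc.deriv_eq_zero
    rwa [(hd x hxmem).deriv] at this
  obtain ⟨η₂, hη₂, hlt⟩ : ∃ η₂ > 0, ∀ y ∈ Ioo (x - η₂) (x + η₂), f'' y < 0 := by
    have : ∀ᶠ y in 𝓝 x, f'' y < 0 := hc.eventually_lt_const hneg
    obtain ⟨ε, hε, hb⟩ := Metric.eventually_nhds_iff_ball.mp this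
    refine ⟨ε, hε, fun y hy => hb y ?_⟩
    simp only [Metric.mem_ball, Real.dist_eq, abs_lt]
    constructor <;> [linarith [hy.1]; linarith [hy.2]]
  set η' := min η η₂ with hη'def
  have hη' : 0 < η' := lt_min hη hη₂
  have hη'le : η' ≤ η := min_le_left _ _
  have hη'le2 : η' ≤ η₂ := min_le_right _ _
  have hsub : Icc x (x + η'/2) ⊆ Ioo (x - η) (x + η) := by
    intro y hy; exact ⟨by linarith [hy.1], by linarith [hy.2]⟩
  have hsub2 : Icc x (x + η'/2) ⊆ Ioo (x - η₂) (x + η₂) := by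
    intro y hy; exact ⟨by linarith [hy.1], by linarith [hy.2]⟩
  have hanti : StrictAntiOn f' (Icc x (x + η'/2)) := by
    apply strictAntiOn_of_deriv_neg (convex_Icc _ _)
    · exact continuousOn_of_forall_continuousAt
        (fun y hy => ((hd2 y (hsub hy)).continuousAt))
    · intro y hy
      rw [interior_Icc] at hy
      have hy' : y ∈ Icc x (x + η'/2) := ⟨hy.1.le, hy.2.le⟩
      rw [(hd2 y (hsub hy')).deriv]
      exact hlt y (hsub2 hy')
  have hf'neg : ∀ y ∈ Ioc x (x + η'/2), f' y < 0 := by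
    intro y hy
    have := hanti (left_mem_Icc.mpr (by linarith)) ⟨hy.1.le, hy.2⟩ hy.1
    rwa [hf'x] at this
  have hfanti : StrictAntiOn f (Icc x (x + η'/2)) := by
    apply strictAntiOn_of_deriv_neg (convex_Icc _ _)
    · exact continuousOn_of_forall_continuousAt
        (fun y hy => ((hd y (hsub hy)).continuousAt))
    · intro y hy
      rw [interior_Icc] at hy
      have hy' : y ∈ Icc x (x + η'/2) := ⟨hy.1.le, hy.2.le⟩
      rw [(hd y (hsub hy')).deriv]
      exact hf'neg y ⟨hy.1, hy.2.le⟩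
  have h1 : f (x + η'/2) < f x :=
    hfanti (left_mem_Icc.mpr (by linarith)) (right_mem_Icc.mpr (by linarith)) (by linarith)
  have h2 : f x ≤ f (x + η'/2) := hmin _ (hsub (right_mem_Icc.mpr (by linarith)))
  linarith

/-- Parabolic minimum principle on a rectangle. -/
lemma aux_min_principle (a b T s' : ℝ) (ha : 0 < a) (hab : a < b)
    (hT : -T < s') (w : ℝ → ℝ → ℝ)
    (hw_cont : ContinuousOn (fun q : ℝ × ℝ => w q.1 q.2) (Icc a b ×ˢ Icc (-T) s'))
    (hsup : ∀ ξ ∈ Ioo a b, ∀ s ∈ Ioc (-T) s',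
      ∃ ws : ℝ, HasDerivAt (fun σ => w ξ σ) ws s ∧
        ∃ w1 w2 : ℝ → ℝ,
          (∀ y ∈ Ioo a b, HasDerivAt (fun z => w z s) (w1 y) y) ∧
          (∀ y ∈ Ioo a b, HasDerivAt w1 (w2 y) y) ∧
          ContinuousAt w2 ξ ∧
          (1/2) * w2 ξ + (3/ξ) * w1 ξ + (3/ξ^2) * w ξ s ≤ ws)
    (hbdry_a : ∀ s ∈ Icc (-T) s', 0 ≤ w a s)
    (hbdry_b : ∀ s ∈ Icc (-T) s', 0 ≤ w b s)
    (hbdry_T : ∀ ξ ∈ Icc a b, 0 ≤ w ξ (-T)) :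
    ∀ ξ ∈ Icc a b, ∀ s ∈ Icc (-T) s', 0 ≤ w ξ s := by
  intro ξ₁ hξ₁ s₁ hs₁
  set lam := 3 / a^2 with hlam
  have key : ∀ δ > 0, 0 ≤ Real.exp (-lam * (s₁ + T)) * w ξ₁ s₁ + δ * (s₁ + T + 1) := by
    intro δ hδ
    set v : ℝ → ℝ → ℝ := fun ξ s => Real.exp (-lam * (s + T)) * w ξ s + δ * (s + T + 1)
      with hv
    set K : Set (ℝ × ℝ) := Icc a b ×ˢ Icc (-T) s' with hK
    have hKcomp : IsCompact K := (isCompact_Icc).prod (isCompact_Icc)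
    have hKne : K.Nonempty := ⟨(ξ₁, s₁), ⟨hξ₁, hs₁⟩⟩
    have hc1 : Continuous (fun q : ℝ × ℝ => Real.exp (-lam * (q.2 + T))) :=
      Real.continuous_exp.comp (by continuity)
    have hc2 : Continuous (fun q : ℝ × ℝ => δ * (q.2 + T + 1)) := by continuity
    have hvcont : ContinuousOn (fun q : ℝ × ℝ => v q.1 q.2) K :=
      (hc1.continuousOn.mul hw_cont).add hc2.continuousOn
    obtain ⟨⟨ξ₀, s₀⟩, ⟨hξ₀, hs₀⟩, hzmin⟩ := hKcomp.exists_isMinOn hKne hvcont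
    have hξ₀ : ξ₀ ∈ Icc a b := hξ₀
    have hs₀ : s₀ ∈ Icc (-T) s' := hs₀
    have hmin' : ∀ ξ ∈ Icc a b, ∀ s ∈ Icc (-T) s', v ξ₀ s₀ ≤ v ξ s := by
      intro ξ hξ s hs
      exact isMinOn_iff.mp hzmin (ξ, s) ⟨hξ, hs⟩
    suffices hz : 0 ≤ v ξ₀ s₀ by
      exact le_trans hz (hmin' ξ₁ hξ₁ s₁ hs₁)
    by_contra hneg
    push_neg at hneg
    have hsTpos : ∀ s ∈ Icc (-T) s', (0:ℝ) < δ * (s + T + 1) := by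
      intro s hs
      have : (1:ℝ) ≤ s + T + 1 := by linarith [hs.1]
      nlinarith
    have hξ₀a : a < ξ₀ := by
      rcases lt_or_eq_of_le hξ₀.1 with h | h
      · exact h
      · exfalso
        have h0 : 0 ≤ w ξ₀ s₀ := by rw [← h]; exact hbdry_a s₀ hs₀
        have := hsTpos s₀ hs₀
        have hE := Real.exp_pos (-lam * (s₀ + T))
        simp only [hv] at hneg
        nlinarith
    have hξ₀b : ξ₀ < b := by
      rcases lt_or_eq_of_le hξ₀.2 with h | h
      · exact h
      · exfalso
        have h0 : 0 ≤ w ξ₀ s₀ := by rw [h]; exact hbdry_b s₀ hs₀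
        have := hsTpos s₀ hs₀
        have hE := Real.exp_pos (-lam * (s₀ + T))
        simp only [hv] at hneg
        nlinarith
    have hs₀T : -T < s₀ := by
      rcases lt_or_eq_of_le hs₀.1 with h | h
      · exact h
      · exfalso
        have h0 : 0 ≤ w ξ₀ s₀ := by rw [← h]; exact hbdry_T ξ₀ hξ₀
        have := hsTpos s₀ hs₀
        have hE := Real.exp_pos (-lam * (s₀ + T))
        simp only [hv] at hneg
        nlinarith
    obtain ⟨ws, hws, w1, w2, hw1, hw2, hw2c, hineq⟩ :=
      hsup ξ₀ ⟨hξ₀a, hξ₀b⟩ s₀ ⟨hs₀T, hs₀.2⟩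
    set E₀ := Real.exp (-lam * (s₀ + T)) with hE₀
    have hE₀pos : 0 < E₀ := Real.exp_pos _
    have hvs : HasDerivAt (fun σ => v ξ₀ σ) (E₀ * ws + (-lam * E₀) * w ξ₀ s₀ + δ) s₀ := by
      have hE : HasDerivAt (fun σ : ℝ => Real.exp (-lam * (σ + T))) (-lam * E₀) s₀ := by
        have hlin : HasDerivAt (fun σ : ℝ => -lam * (σ + T)) (-lam) s₀ := by
          simpa using (((hasDerivAt_id s₀).add_const T).const_mul (-lam))
        simpa [hE₀, mul_comm] using hlin.exp
      have hm := hE.mul hws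
      have hlin2 : HasDerivAt (fun σ : ℝ => δ * (σ + T + 1)) δ s₀ := by
        simpa [add_assoc] using (((hasDerivAt_id s₀).add_const (T + 1)).const_mul δ)
      have := hm.add hlin2
      exact this.congr_deriv (by rw [hE₀]; ring)
    have hvs_le : E₀ * ws + (-lam * E₀) * w ξ₀ s₀ + δ ≤ 0 := by
      apply aux_deriv_nonpos_left hvs
      have hmem : Ioo (-T) s₀ ∈ 𝓝[<] s₀ := Ioo_mem_nhdsLT_of_mem ⟨hs₀T, le_refl _⟩
      filter_upwards [hmem] with y hy
      exact hmin' ξ₀ hξ₀ y ⟨hy.1.le, hy.2.le.trans hs₀.2⟩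
    have hspace : ∀ y ∈ Ioo a b, HasDerivAt (fun z => v z s₀) (E₀ * w1 y) y := by
      intro y hy
      exact ((hw1 y hy).const_mul E₀).add_const _
    have hspace2 : ∀ y ∈ Ioo a b, HasDerivAt (fun y => E₀ * w1 y) (E₀ * w2 y) y :=
      fun y hy => (hw2 y hy).const_mul E₀
    set η := min (ξ₀ - a) (b - ξ₀) with hη
    have hηpos : 0 < η := lt_min (by linarith) (by linarith)
    have hη1 : η ≤ ξ₀ - a := min_le_left _ _
    have hη2 : η ≤ b - ξ₀ := min_le_right _ _
    have hsubset : Ioo (ξ₀ - η) (ξ₀ + η) ⊆ Ioo a b := by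
      intro y hy
      exact ⟨by linarith [hy.1], by linarith [hy.2]⟩
    have hminspace : ∀ y ∈ Ioo (ξ₀ - η) (ξ₀ + η), v ξ₀ s₀ ≤ v y s₀ := by
      intro y hy
      exact hmin' y ⟨(hsubset hy).1.le, (hsubset hy).2.le⟩ s₀ hs₀
    have hw1z : w1 ξ₀ = 0 := by
      have hloc : IsLocalMin (fun z => v z s₀) ξ₀ :=
        Filter.eventually_of_mem
          (Ioo_mem_nhds (by linarith) (by linarith)) hminspace
      have := hloc.deriv_eq_zero
      rw [(hspace ξ₀ ⟨hξ₀a, hξ₀b⟩).deriv] at this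
      exact (mul_eq_zero.mp this).resolve_left (ne_of_gt hE₀pos)
    have hw2z : 0 ≤ w2 ξ₀ := by
      have h2 : 0 ≤ (fun y => E₀ * w2 y) ξ₀ :=
        aux_second_deriv_nonneg (f := fun y => v y s₀) (f' := fun y => E₀ * w1 y)
          (f'' := fun y => E₀ * w2 y) (x := ξ₀) hηpos
          (fun y hy => hspace y (hsubset hy))
          (fun y hy => hspace2 y (hsubset hy))
          (continuousAt_const.mul hw2c) hminspace
      simp only at h2
      nlinarith
    -- final contradiction
    have hw0neg : w ξ₀ s₀ < 0 := by
      have := hsTpos s₀ hs₀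
      simp only [hv] at hneg
      nlinarith
    have hcoef : 3 / ξ₀^2 ≤ lam := by
      rw [hlam]
      apply div_le_div_of_nonneg_left (by norm_num) (by positivity)
      nlinarith
    have hprod : 0 ≤ (3 / ξ₀^2 - lam) * w ξ₀ s₀ := by nlinarith
    have hws_lb : E₀ * ((1/2) * w2 ξ₀ + (3/ξ₀) * w1 ξ₀ + (3/ξ₀^2) * w ξ₀ s₀) ≤ E₀ * ws :=
      mul_le_mul_of_nonneg_left hineq hE₀pos.le
    rw [hw1z] at hws_lb
    have hEprod : 0 ≤ E₀ * ((3 / ξ₀^2 - lam) * w ξ₀ s₀) := mul_nonneg hE₀pos.le hprod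
    have hEw2 : 0 ≤ E₀ * ((1/2) * w2 ξ₀) := mul_nonneg hE₀pos.le (by linarith)
    nlinarith [hvs_le, hws_lb, hEprod, hEw2, hδ]
  -- now let δ → 0
  by_contra hcon
  push_neg at hcon
  have hEpos := Real.exp_pos (-lam * (s₁ + T))
  have hspos : (0:ℝ) < s₁ + T + 1 := by linarith [hs₁.1]
  set δ₀ := (-(Real.exp (-lam * (s₁ + T)) * w ξ₁ s₁)) / (2 * (s₁ + T + 1)) with hδ₀
  have hwneg : Real.exp (-lam * (s₁ + T)) * w ξ₁ s₁ < 0 := by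
    apply mul_neg_of_pos_of_neg hEpos hcon
  have hδ₀pos : 0 < δ₀ := by
    apply div_pos (by linarith) (by linarith)
  have := key δ₀ hδ₀pos
  rw [hδ₀] at this
  have : -(Real.exp (-lam * (s₁ + T)) * w ξ₁ s₁) / (2 * (s₁ + T + 1)) * (s₁ + T + 1)
      = -(Real.exp (-lam * (s₁ + T)) * w ξ₁ s₁) / 2 := by
    field_simp
  linarith [key δ₀ hδ₀pos, this]

/-- smoothness facts for h -/
lemma aux_smooth (h : ℝ → ℝ → ℝ)
    (hsmooth : ContDiffOn ℝ (⊤ : ℕ∞) (fun q : ℝ × ℝ => h q.1 q.2)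
      (Set.Ioi (0:ℝ) ×ˢ Set.Iic (0:ℝ))) :
    ∀ ξ > (0:ℝ), ∀ s < (0:ℝ),
      HasDerivAt (fun σ => h ξ σ) (deriv (fun σ => h ξ σ) s) s ∧
      HasDerivAt (fun y => h y s) (deriv (fun y => h y s) ξ) ξ ∧
      HasDerivAt (deriv (fun y => h y s)) (deriv (deriv (fun y => h y s)) ξ) ξ ∧
      ContinuousAt (deriv (deriv (fun y => h y s))) ξ := by
  intro ξ hξ s hs
  have hΩ : IsOpen (Ioi (0:ℝ) ×ˢ Iio (0:ℝ)) := isOpen_Ioi.prod isOpen_Iio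
  have hmono : ContDiffOn ℝ (⊤ : ℕ∞) (fun q : ℝ × ℝ => h q.1 q.2) (Ioi (0:ℝ) ×ˢ Iio (0:ℝ)) :=
    hsmooth.mono (prod_mono_right Iio_subset_Iic_self)
  have hct : ContDiffAt ℝ (⊤ : ℕ∞) (fun q : ℝ × ℝ => h q.1 q.2) (ξ, s) :=
    hmono.contDiffAt (hΩ.mem_nhds ⟨hξ, hs⟩)
  have h1 : ContDiffAt ℝ (⊤ : ℕ∞) (fun σ : ℝ => h ξ σ) s := by
    have hcomp : ContDiffAt ℝ (⊤ : ℕ∞) (fun σ : ℝ => ((ξ, σ) : ℝ × ℝ)) s :=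
      contDiffAt_const.prodMk contDiffAt_id
    exact hct.comp s hcomp
  refine ⟨(h1.differentiableAt (by simp)).hasDerivAt, ?_, ?_, ?_⟩
  all_goals {
    have hcs : ContDiffOn ℝ (⊤ : ℕ∞) (fun y : ℝ => h y s) (Ioi 0) := by
      intro y hy
      have hcty : ContDiffAt ℝ (⊤ : ℕ∞) (fun q : ℝ × ℝ => h q.1 q.2) (y, s) :=
        hmono.contDiffAt (hΩ.mem_nhds ⟨hy, hs⟩)
      have hcomp : ContDiffAt ℝ (⊤ : ℕ∞) (fun y : ℝ => ((y, s) : ℝ × ℝ)) y :=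
        contDiffAt_id.prodMk contDiffAt_const
      exact (hcty.comp y hcomp).contDiffWithinAt
    have hg1 : ContDiffOn ℝ (⊤ : ℕ∞) (deriv fun y => h y s) (Ioi 0) :=
      hcs.deriv_of_isOpen isOpen_Ioi (by simp)
    have hg2 : ContDiffOn ℝ (⊤ : ℕ∞) (deriv (deriv fun y => h y s)) (Ioi 0) :=
      hg1.deriv_of_isOpen isOpen_Ioi (by simp)
    first
    | exact ((hcs.contDiffAt (isOpen_Ioi.mem_nhds hξ)).differentiableAt (by simp)).hasDerivAt
    | exact ((hg1.contDiffAt (isOpen_Ioi.mem_nhds hξ)).differentiableAt (by simp)).hasDerivAt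
    | exact (hg2.continuousOn.continuousAt (isOpen_Ioi.mem_nhds hξ))
  }

lemma aux_compare (m : ℝ) (hm2 : 2 < m) (hm3 : m < 3)
    (h : ℝ → ℝ → ℝ)
    (hsmooth : ContDiffOn ℝ (⊤ : ℕ∞) (fun q : ℝ × ℝ => h q.1 q.2)
      (Set.Ioi (0:ℝ) ×ˢ Set.Iic (0:ℝ)))
    (heq : ∀ ξ > (0:ℝ), ∀ s ≤ (0:ℝ),
      deriv (fun σ => h ξ σ) s
        = (1 / 2) * deriv (deriv (fun y => h y s)) ξ
          + (3 / ξ) * deriv (fun y => h y s) ξ + (3 / ξ ^ 2) * h ξ s)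
    (hbd : ∀ ξ > (0:ℝ), ∀ s ≤ (0:ℝ), |h ξ s| ≤ ξ ^ (-m))
    (σ : ℝ) (hσ : σ = 1 ∨ σ = -1)
    (a b T s' : ℝ) (ha : 0 < a) (hab : a < b) (hs' : s' < 0) (hT : -T < s') :
    ∀ ξ ∈ Icc a b, ∀ s ∈ Icc (-T) s',
      σ * h ξ s ≤ a ^ (3-m) * ξ ^ (-3:ℝ) + b ^ (2-m) * ξ ^ (-2:ℝ)
        + Real.exp (-((m-2)*(3-m)/2/b^2) * (s + T)) * ξ ^ (-m) := by
  set c := (m-2)*(3-m)/2 with hcdef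
  have hcpos : 0 < c := by rw [hcdef]; nlinarith
  have hbpos : 0 < b := lt_trans ha hab
  set A := a ^ (3-m) with hA
  set B := b ^ (2-m) with hB
  set w : ℝ → ℝ → ℝ := fun ξ s =>
    A * ξ ^ (-3:ℝ) + B * ξ ^ (-2:ℝ) + Real.exp (-(c/b^2) * (s + T)) * ξ ^ (-m)
      - σ * h ξ s with hw
  have hσh : ∀ ξ > (0:ℝ), ∀ s ≤ (0:ℝ), σ * h ξ s ≤ ξ ^ (-m) := by
    intro ξ hξ s hs
    rcases hσ with rfl | rfl
    · simpa using (le_trans (le_abs_self _) (hbd ξ hξ s hs))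
    · have h1 := hbd ξ hξ s hs
      have h2 := neg_abs_le (h ξ s)
      nlinarith
  -- continuity of w on the rectangle
  have hrect_sub : Icc a b ×ˢ Icc (-T) s' ⊆ Ioi (0:ℝ) ×ˢ Iic (0:ℝ) := by
    rintro ⟨x, t⟩ ⟨hx, ht⟩
    exact ⟨lt_of_lt_of_le ha hx.1, le_trans ht.2 hs'.le⟩
  have hwcont : ContinuousOn (fun q : ℝ × ℝ => w q.1 q.2) (Icc a b ×ˢ Icc (-T) s') := by
    have hne : ∀ q : ℝ × ℝ, q ∈ Icc a b ×ˢ Icc (-T) s' → q.1 ≠ 0 := by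
      rintro ⟨x, t⟩ ⟨hx, ht⟩
      exact ne_of_gt (lt_of_lt_of_le ha hx.1)
    have hrpow : ∀ p : ℝ, ContinuousOn (fun q : ℝ × ℝ => q.1 ^ p) (Icc a b ×ˢ Icc (-T) s') := by
      intro p
      apply continuousOn_of_forall_continuousAt
      intro q hq
      exact (Real.continuousAt_rpow_const q.1 p (Or.inl (hne q hq))).comp continuousAt_fst
    have hexp : Continuous (fun q : ℝ × ℝ => Real.exp (-(c/b^2) * (q.2 + T))) :=
      Real.continuous_exp.comp (by continuity)
    have hh : ContinuousOn (fun q : ℝ × ℝ => h q.1 q.2) (Icc a b ×ˢ Icc (-T) s') :=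
      (hsmooth.continuousOn).mono hrect_sub
    exact ((((hrpow (-3)).const_smul A).add ((hrpow (-2)).const_smul B)).add
      (hexp.continuousOn.mul (hrpow (-m)))).sub (hh.const_smul σ)
  -- boundary conditions
  have hrpow_nonneg : ∀ x p : ℝ, 0 ≤ x → (0:ℝ) ≤ x ^ p := fun x p hx => Real.rpow_nonneg hx p
  have hAnn : 0 ≤ A := Real.rpow_nonneg ha.le _
  have hBnn : 0 ≤ B := Real.rpow_nonneg hbpos.le _
  have hbdry_a : ∀ s ∈ Icc (-T) s', 0 ≤ w a s := by
    intro s hs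
    have hs0 : s ≤ 0 := le_trans hs.2 hs'.le
    have h1 : A * a ^ (-3:ℝ) = a ^ (-m) := by
      rw [hA, ← Real.rpow_add ha]
      congr 1; ring
    have h2 : σ * h a s ≤ a ^ (-m) := hσh a ha s hs0
    have h3 : 0 ≤ B * a ^ (-2:ℝ) := mul_nonneg hBnn (Real.rpow_nonneg ha.le _)
    have h4 : 0 ≤ Real.exp (-(c/b^2) * (s + T)) * a ^ (-m) :=
      mul_nonneg (Real.exp_pos _).le (Real.rpow_nonneg ha.le _)
    simp only [hw]
    linarith [h1.ge]
  have hbdry_b : ∀ s ∈ Icc (-T) s', 0 ≤ w b s := by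
    intro s hs
    have hs0 : s ≤ 0 := le_trans hs.2 hs'.le
    have h1 : B * b ^ (-2:ℝ) = b ^ (-m) := by
      rw [hB, ← Real.rpow_add hbpos]
      congr 1; ring
    have h2 : σ * h b s ≤ b ^ (-m) := hσh b hbpos s hs0
    have h3 : 0 ≤ A * b ^ (-3:ℝ) := mul_nonneg hAnn (Real.rpow_nonneg hbpos.le _)
    have h4 : 0 ≤ Real.exp (-(c/b^2) * (s + T)) * b ^ (-m) :=
      mul_nonneg (Real.exp_pos _).le (Real.rpow_nonneg hbpos.le _)
    simp only [hw]
    linarith [h1.ge]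
  have hbdry_T : ∀ ξ ∈ Icc a b, 0 ≤ w ξ (-T) := by
    intro ξ hξ
    have hξpos : 0 < ξ := lt_of_lt_of_le ha hξ.1
    have h1 : Real.exp (-(c/b^2) * (-T + T)) = 1 := by
      norm_num
    have h2 : σ * h ξ (-T) ≤ ξ ^ (-m) := hσh ξ hξpos (-T) (by linarith)
    have h3 : 0 ≤ A * ξ ^ (-3:ℝ) := mul_nonneg hAnn (Real.rpow_nonneg hξpos.le _)
    have h4 : 0 ≤ B * ξ ^ (-2:ℝ) := mul_nonneg hBnn (Real.rpow_nonneg hξpos.le _)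
    simp only [hw, h1]
    linarith
  -- the supersolution property
  have hsup : ∀ ξ ∈ Ioo a b, ∀ s ∈ Ioc (-T) s',
      ∃ ws : ℝ, HasDerivAt (fun σ' => w ξ σ') ws s ∧
        ∃ w1 w2 : ℝ → ℝ,
          (∀ y ∈ Ioo a b, HasDerivAt (fun z => w z s) (w1 y) y) ∧
          (∀ y ∈ Ioo a b, HasDerivAt w1 (w2 y) y) ∧
          ContinuousAt w2 ξ ∧
          (1/2) * w2 ξ + (3/ξ) * w1 ξ + (3/ξ^2) * w ξ s ≤ ws := by
    intro ξ hξ s hs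
    have hξpos : 0 < ξ := lt_trans ha hξ.1
    have hsneg : s < 0 := lt_of_le_of_lt hs.2 hs'
    set E : ℝ := Real.exp (-(c/b^2) * (s + T)) with hE
    have hEpos : 0 < E := Real.exp_pos _
    obtain ⟨HDs, _, _, _⟩ := aux_smooth h hsmooth ξ hξpos s hsneg
    -- time derivative
    refine ⟨-(c/b^2) * E * ξ ^ (-m) - σ * deriv (fun σ' => h ξ σ') s, ?_, ?_⟩
    · have hEd : HasDerivAt (fun σ' : ℝ => Real.exp (-(c/b^2) * (σ' + T)))
          (-(c/b^2) * E) s := by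
        have hlin : HasDerivAt (fun σ' : ℝ => -(c/b^2) * (σ' + T)) (-(c/b^2)) s := by
          simpa using (((hasDerivAt_id s).add_const T).const_mul (-(c/b^2)))
        simpa [hE, mul_comm] using hlin.exp
      have t1 : HasDerivAt (fun σ' : ℝ => A * ξ ^ (-3:ℝ) + B * ξ ^ (-2:ℝ)) 0 s :=
        hasDerivAt_const s _
      have t2 : HasDerivAt (fun σ' : ℝ => Real.exp (-(c/b^2) * (σ' + T)) * ξ ^ (-m))
          (-(c/b^2) * E * ξ ^ (-m)) s := hEd.mul_const _
      have t3 : HasDerivAt (fun σ' : ℝ => σ * h ξ σ')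
          (σ * deriv (fun σ' => h ξ σ') s) s := HDs.const_mul σ
      have := (t1.add t2).sub t3
      exact this.congr_deriv (by ring)
    -- spatial derivatives
    · set g1 : ℝ → ℝ := deriv (fun y => h y s) with hg1
      set g2 : ℝ → ℝ := deriv g1 with hg2
      refine ⟨fun y => A * (-3 * y ^ (-4:ℝ)) + B * (-2 * y ^ (-3:ℝ))
          + E * (-m * y ^ (-m-1)) - σ * g1 y,
        fun y => A * (-3 * (-4 * y ^ (-5:ℝ))) + B * (-2 * (-3 * y ^ (-4:ℝ)))
          + E * (-m * ((-m-1) * y ^ (-m-2))) - σ * g2 y, ?_, ?_, ?_, ?_⟩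
      · intro y hy
        have hypos : 0 < y := lt_trans ha hy.1
        have hyne : y ≠ 0 := ne_of_gt hypos
        obtain ⟨_, HD1, _, _⟩ := aux_smooth h hsmooth y hypos s hsneg
        have P3 : HasDerivAt (fun z : ℝ => z ^ (-3:ℝ)) (-3 * y ^ (-4:ℝ)) y := by
          have := Real.hasDerivAt_rpow_const (x := y) (p := (-3:ℝ)) (Or.inl hyne)
          convert this using 2
          norm_num
        have P2 : HasDerivAt (fun z : ℝ => z ^ (-2:ℝ)) (-2 * y ^ (-3:ℝ)) y := by
          have := Real.hasDerivAt_rpow_const (x := y) (p := (-2:ℝ)) (Or.inl hyne)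
          convert this using 2
          norm_num
        have Pm : HasDerivAt (fun z : ℝ => z ^ (-m)) (-m * y ^ (-m-1)) y :=
          Real.hasDerivAt_rpow_const (x := y) (p := (-m:ℝ)) (Or.inl hyne)
        have := (((P3.const_mul A).add (P2.const_mul B)).add (Pm.const_mul E)).sub
          (HD1.const_mul σ)
        exact this.congr_deriv (by ring)
      · intro y hy
        have hypos : 0 < y := lt_trans ha hy.1
        have hyne : y ≠ 0 := ne_of_gt hypos
        obtain ⟨_, _, HD2, _⟩ := aux_smooth h hsmooth y hypos s hsneg
        have P4 : HasDerivAt (fun z : ℝ => z ^ (-4:ℝ)) (-4 * y ^ (-5:ℝ)) y := by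
          have := Real.hasDerivAt_rpow_const (x := y) (p := (-4:ℝ)) (Or.inl hyne)
          convert this using 2
          norm_num
        have P3 : HasDerivAt (fun z : ℝ => z ^ (-3:ℝ)) (-3 * y ^ (-4:ℝ)) y := by
          have := Real.hasDerivAt_rpow_const (x := y) (p := (-3:ℝ)) (Or.inl hyne)
          convert this using 2
          norm_num
        have Pm1 : HasDerivAt (fun z : ℝ => z ^ (-m-1)) ((-m-1) * y ^ (-m-2)) y := by
          have := Real.hasDerivAt_rpow_const (x := y) (p := (-m-1:ℝ)) (Or.inl hyne)
          convert this using 2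
          ring
        have := ((((P4.const_mul (-3)).const_mul A).add
          ((P3.const_mul (-2)).const_mul B)).add
          ((Pm1.const_mul (-m)).const_mul E)).sub (HD2.const_mul σ)
        exact this
      · -- continuity of w2 at ξ
        obtain ⟨_, _, _, Hc2⟩ := aux_smooth h hsmooth ξ hξpos s hsneg
        have hrp : ∀ p : ℝ, ContinuousAt (fun z : ℝ => z ^ p) ξ := fun p =>
          Real.continuousAt_rpow_const ξ p (Or.inl (ne_of_gt hξpos))
        exact ((((((hrp (-5)).const_mul (-4)).const_mul (-3)).const_mul A).add
          (((((hrp (-4)).const_mul (-3))).const_mul (-2)).const_mul B)).add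
          ((((hrp (-m-2)).const_mul (-m-1)).const_mul (-m)).const_mul E)).sub
          (Hc2.const_mul σ)
      · -- the key differential inequality
        have hξne : ξ ≠ 0 := ne_of_gt hξpos
        have hstep : ∀ p : ℝ, ξ ^ (p+1) = ξ ^ p * ξ :=
          fun p => Real.rpow_add_one hξne p
        have e4 : ξ ^ (-4:ℝ) = ξ ^ (-5:ℝ) * ξ := by
          have := hstep (-5); norm_num at this ⊢; exact this
        have e3 : ξ ^ (-3:ℝ) = ξ ^ (-4:ℝ) * ξ := by
          have := hstep (-4); norm_num at this ⊢; exact this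
        have e2 : ξ ^ (-2:ℝ) = ξ ^ (-3:ℝ) * ξ := by
          have := hstep (-3); norm_num at this ⊢; exact this
        have em0 : ξ ^ (-m) = ξ ^ (-m-1) * ξ := by
          have := hstep (-m-1); rw [show -m-1+1 = -m by ring] at this; exact this
        have em1 : ξ ^ (-m-1) = ξ ^ (-m-2) * ξ := by
          have := hstep (-m-2); rw [show -m-2+1 = -m-1 by ring] at this; exact this
        have hEq := heq ξ hξpos s hsneg.le
        have HL : (1/2) * (A * (-3 * (-4 * ξ ^ (-5:ℝ))) + B * (-2 * (-3 * ξ ^ (-4:ℝ)))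
              + E * (-m * ((-m-1) * ξ ^ (-m-2))) - σ * g2 ξ)
            + (3/ξ) * (A * (-3 * ξ ^ (-4:ℝ)) + B * (-2 * ξ ^ (-3:ℝ))
              + E * (-m * ξ ^ (-m-1)) - σ * g1 ξ)
            + (3/ξ^2) * (A * ξ ^ (-3:ℝ) + B * ξ ^ (-2:ℝ) + E * ξ ^ (-m) - σ * h ξ s)
            = -c * E * ξ ^ (-m-2)
              - σ * ((1/2) * g2 ξ + (3/ξ) * g1 ξ + (3/ξ^2) * h ξ s) := by
          rw [e2, e3, e4, em0, em1, hcdef]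
          field_simp
          ring
        simp only [hw, ← hg1, ← hg2]
        rw [HL, hEq]
        simp only [← hg1, ← hg2]
        rw [em0, em1]
        have hmpos : (0:ℝ) < ξ ^ (-m-2) := Real.rpow_pos_of_pos hξpos _
        have hξleb : ξ ≤ b := hξ.2.le
        have hb2 : ξ^2 ≤ b^2 := by nlinarith
        have hkey : (c/b^2) * E * (ξ ^ (-m-2) * ξ * ξ) ≤ c * E * ξ ^ (-m-2) := by
          rw [div_mul_eq_mul_div, div_mul_eq_mul_div, div_le_iff₀ (by positivity)]
          have hrw : c * E * (ξ ^ (-m-2) * ξ * ξ) = c * E * ξ ^ (-m-2) * ξ^2 := by ring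
          rw [hrw]
          have h2 : c * E * ξ ^ (-m-2) * ξ^2 ≤ c * E * ξ ^ (-m-2) * b^2 := by
            apply mul_le_mul_of_nonneg_left hb2
            positivity
          linarith
        linarith [hkey]
  have := aux_min_principle a b T s' ha hab hT w hwcont hsup hbdry_a hbdry_b hbdry_T
  intro ξ hξ s hs
  have h0 := this ξ hξ s hs
  simp only [hw] at h0
  rw [show -((m-2)*(3-m)/2/b^2) = -(c/b^2) by rw [hcdef]]
  linarith

/-- Liouville-type theorem: an ancient solution of the blow-up limit equation
`h_s = ½ h_ξξ + (3/ξ) h_ξ + (3/ξ²) h` with `|h(ξ,s)| ≤ ξ^{-m}`, `2 < m < 3`,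
vanishes identically. -/
theorem stmt_17 (m : ℝ) (hm : m ∈ Set.Ioo (2:ℝ) 3)
    (h : ℝ → ℝ → ℝ)
    (hsmooth : ContDiffOn ℝ (⊤ : ℕ∞) (fun q : ℝ × ℝ => h q.1 q.2)
      (Set.Ioi (0:ℝ) ×ˢ Set.Iic (0:ℝ)))
    (heq : ∀ ξ > (0:ℝ), ∀ s ≤ (0:ℝ),
      deriv (fun σ => h ξ σ) s
        = (1 / 2) * deriv (deriv (fun y => h y s)) ξ
          + (3 / ξ) * deriv (fun y => h y s) ξ + (3 / ξ ^ 2) * h ξ s)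
    (hbd : ∀ ξ > (0:ℝ), ∀ s ≤ (0:ℝ), |h ξ s| ≤ ξ ^ (-m)) :
    ∀ ξ > (0:ℝ), ∀ s ≤ (0:ℝ), h ξ s = 0 := by
  obtain ⟨hm2, hm3⟩ := hm
  set c := (m-2)*(3-m)/2 with hcdef
  have hcpos : 0 < c := by rw [hcdef]; nlinarith
  -- first: vanishing for s < 0
  have hneg : ∀ ξ > (0:ℝ), ∀ s < (0:ℝ), h ξ s = 0 := by
    intro ξ hξ s hs
    have key : ∀ σ : ℝ, σ = 1 ∨ σ = -1 → σ * h ξ s ≤ 0 := by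
      intro σ hσ
      by_contra hpos
      push_neg at hpos
      set ε := σ * h ξ s / 4 with hεdef
      have hε : 0 < ε := by positivity
      -- choose a
      have hξ3pos : (0:ℝ) < ξ ^ (3:ℝ) := Real.rpow_pos_of_pos hξ _
      have hXa_pos : (0:ℝ) < (ε * ξ ^ (3:ℝ)) ^ (3-m)⁻¹ :=
        Real.rpow_pos_of_pos (by positivity) _
      set a := min (ξ/2) ((ε * ξ ^ (3:ℝ)) ^ (3-m)⁻¹) with hadef
      have hapos : 0 < a := lt_min (by linarith) hXa_pos
      have haξ : a < ξ := lt_of_le_of_lt (min_le_left _ _) (by linarith)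
      have hbound1 : a ^ (3-m) * ξ ^ (-3:ℝ) ≤ ε := by
        have h1 : a ^ (3-m) ≤ ((ε * ξ ^ (3:ℝ)) ^ (3-m)⁻¹) ^ (3-m) :=
          Real.rpow_le_rpow hapos.le (min_le_right _ _) (by linarith)
        rw [Real.rpow_inv_rpow (by positivity) (by intro hc0; nlinarith)] at h1
        have h2 : a ^ (3-m) * ξ ^ (-3:ℝ) ≤ ε * ξ ^ (3:ℝ) * ξ ^ (-3:ℝ) :=
          mul_le_mul_of_nonneg_right h1 (Real.rpow_nonneg hξ.le _)
        have h3 : ε * ξ ^ (3:ℝ) * ξ ^ (-3:ℝ) = ε := by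
          rw [mul_assoc, ← Real.rpow_add hξ]
          norm_num
        linarith
      -- choose b
      have hξ2pos : (0:ℝ) < ξ ^ (2:ℝ) := Real.rpow_pos_of_pos hξ _
      have hXb_pos : (0:ℝ) < ((ε * ξ ^ (2:ℝ))⁻¹) ^ (m-2)⁻¹ :=
        Real.rpow_pos_of_pos (by positivity) _
      set b := max (ξ+1) (((ε * ξ ^ (2:ℝ))⁻¹) ^ (m-2)⁻¹) with hbdef
      have hbξ : ξ < b := lt_of_lt_of_le (by linarith) (le_max_left _ _)
      have hbpos : 0 < b := lt_trans hξ hbξ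
      have hbound2 : b ^ (2-m) * ξ ^ (-2:ℝ) ≤ ε := by
        have h1 : ((ε * ξ ^ (2:ℝ))⁻¹ : ℝ) ≤ b ^ (m-2) := by
          have := Real.rpow_le_rpow hXb_pos.le (le_max_right (ξ+1) _) (by linarith : (0:ℝ) ≤ m-2)
          rwa [Real.rpow_inv_rpow (by positivity) (by intro hc0; nlinarith)] at this
        have hb2pos : (0:ℝ) < b ^ (m-2) := Real.rpow_pos_of_pos hbpos _
        have h2 : b ^ (2-m) = (b ^ (m-2))⁻¹ := by
          rw [← Real.rpow_neg hbpos.le]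
          norm_num
        have h3 : (b ^ (m-2))⁻¹ ≤ ε * ξ ^ (2:ℝ) := by
          rw [inv_le_comm₀ hb2pos (by positivity)] at *
          · exact h1
        have h4 : b ^ (2-m) * ξ ^ (-2:ℝ) ≤ ε * ξ ^ (2:ℝ) * ξ ^ (-2:ℝ) := by
          rw [h2]
          exact mul_le_mul_of_nonneg_right h3 (Real.rpow_nonneg hξ.le _)
        have h5 : ε * ξ ^ (2:ℝ) * ξ ^ (-2:ℝ) = ε := by
          rw [mul_assoc, ← Real.rpow_add hξ]
          norm_num
        linarith
      -- choose T
      have hξmpos : (0:ℝ) < ξ ^ m := Real.rpow_pos_of_pos hξ _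
      set M := max 0 (-Real.log (ε * ξ ^ m)) with hMdef
      have hM0 : 0 ≤ M := le_max_left _ _
      set T := -s + (b^2/c) * (M+1) with hTdef
      have hsT : s + T = (b^2/c) * (M+1) := by rw [hTdef]; ring
      have hTneg : -T < s := by
        have h0 : (0:ℝ) < (b^2/c) * (M+1) := by positivity
        rw [← hsT] at h0
        linarith
      have hbound3 : Real.exp (-(c/b^2) * (s+T)) * ξ ^ (-m) ≤ ε := by
        have hexp : -(c/b^2) * (s+T) = -(M+1) := by
          rw [hsT]
          field_simp
        have hlog : -M ≤ Real.log (ε * ξ ^ m) := by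
          have := le_max_right (0:ℝ) (-Real.log (ε * ξ ^ m))
          simp only [← hMdef] at this
          linarith
        have h1 : Real.exp (-(M+1)) ≤ ε * ξ ^ m := by
          have h2 : Real.exp (-(M+1)) ≤ Real.exp (Real.log (ε * ξ ^ m)) :=
            Real.exp_le_exp.mpr (by linarith)
          rwa [Real.exp_log (by positivity)] at h2
        have h3 : Real.exp (-(c/b^2) * (s+T)) * ξ ^ (-m) ≤ (ε * ξ ^ m) * ξ ^ (-m) := by
          rw [hexp]
          exact mul_le_mul_of_nonneg_right h1 (Real.rpow_nonneg hξ.le _)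
        have h4 : (ε * ξ ^ m) * ξ ^ (-m) = ε := by
          rw [mul_assoc, ← Real.rpow_add hξ]
          norm_num
        linarith
      -- apply the comparison
      have hcomp := aux_compare m hm2 hm3 h hsmooth heq hbd σ hσ a b T s
        hapos (lt_trans haξ hbξ) hs hTneg ξ ⟨haξ.le, hbξ.le⟩ s
        ⟨by linarith, le_refl s⟩
      rw [← hcdef] at hcomp
      have : σ * h ξ s ≤ 3 * ε := by linarith
      rw [hεdef] at this
      linarith
    have h1 := key 1 (Or.inl rfl)
    have h2 := key (-1) (Or.inr rfl)
    linarith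
  -- now s = 0 by continuity
  intro ξ hξ s hs
  rcases lt_or_eq_of_le hs with hslt | rfl
  · exact hneg ξ hξ s hslt
  · have hcont : ContinuousWithinAt (fun σ => h ξ σ) (Iic 0) 0 := by
      have hmem : ((ξ, 0) : ℝ × ℝ) ∈ Ioi (0:ℝ) ×ˢ Iic (0:ℝ) :=
        ⟨hξ, Set.mem_Iic.mpr (le_refl (0:ℝ))⟩
      have hc := hsmooth.continuousOn (x := (ξ, 0)) hmem
      have hmap : Set.MapsTo (fun σ : ℝ => ((ξ, σ) : ℝ × ℝ)) (Iic 0)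
          (Ioi (0:ℝ) ×ˢ Iic (0:ℝ)) := fun σ hσ => ⟨hξ, hσ⟩
      exact hc.comp ((continuous_const.prodMk continuous_id).continuousWithinAt) hmap
    have h1 : Tendsto (fun σ => h ξ σ) (𝓝[<] (0:ℝ)) (𝓝 (h ξ 0)) :=
      hcont.tendsto.mono_left (nhdsWithin_mono _ Iio_subset_Iic_self)
    have h2 : Tendsto (fun σ => h ξ σ) (𝓝[<] (0:ℝ)) (𝓝 0) := by
      have : (fun σ => h ξ σ) =ᶠ[𝓝[<] (0:ℝ)] (fun _ => 0) :=
        eventually_of_mem self_mem_nhdsWithin (fun σ hσ => hneg ξ hξ σ hσ)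
      exact Tendsto.congr' this.symm tendsto_const_nhds
    exact tendsto_nhds_unique h1 h2
end

section
/- Let m ∈ (2,3) and S > 0, and let h : (0,∞) × [−S,0] → ℝ be a smooth solution of ∂_s h(ξ,s) = (1/2)·∂²_ξ h(ξ,s) + (3/ξ)·∂_ξ h(ξ,s) + (3/ξ²)·h(ξ,s) such that |h(ξ,s)| ≤ ξ^{−m} for all (ξ,s) ∈ (0,∞) × [−S,0], and h(ξ,−S) = 0 for all ξ > 0. Then h(ξ,s) = 0 for all (ξ,s) ∈ (0,∞) × [−S,0]. -/
open Filter Set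
open Topology

noncomputable def Phi (x : ℝ) : ℝ := x ^ (-2 : ℤ) + x ^ (-3 : ℤ)
noncomputable def Phi' (x : ℝ) : ℝ := -2 * x ^ (-3 : ℤ) - 3 * x ^ (-4 : ℤ)
noncomputable def Phi'' (x : ℝ) : ℝ := 6 * x ^ (-4 : ℤ) + 12 * x ^ (-5 : ℤ)

lemma Phi_pos {x : ℝ} (hx : 0 < x) : 0 < Phi x := by
  unfold Phi; positivity

lemma hasDerivAt_Phi {x : ℝ} (hx : x ≠ 0) : HasDerivAt Phi (Phi' x) x := by
  have h := (hasDerivAt_zpow (-2) x (Or.inl hx)).add (hasDerivAt_zpow (-3) x (Or.inl hx))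
  unfold Phi Phi'
  refine h.congr_deriv ?_
  push_cast
  norm_num
  ring

lemma hasDerivAt_Phi' {x : ℝ} (hx : x ≠ 0) : HasDerivAt Phi' (Phi'' x) x := by
  have h := ((hasDerivAt_zpow (-3) x (Or.inl hx)).const_mul (-2:ℝ)).sub
    ((hasDerivAt_zpow (-4) x (Or.inl hx)).const_mul (3:ℝ))
  unfold Phi' Phi''
  refine h.congr_deriv ?_
  push_cast
  norm_num
  ring

lemma Phi_key {x : ℝ} (hx : 0 < x) :
    (1/2) * Phi'' x + (3/x) * Phi' x + (3/x^2) * Phi x = 0 := by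
  have h := hx.ne'
  unfold Phi Phi' Phi''
  rw [show (-2:ℤ) = -(2:ℕ) by norm_num, show (-3:ℤ) = -(3:ℕ) by norm_num,
    show (-4:ℤ) = -(4:ℕ) by norm_num, show (-5:ℤ) = -(5:ℕ) by norm_num]
  simp only [zpow_neg, zpow_natCast]
  field_simp
  ring

lemma left_deriv_nonneg {f : ℝ → ℝ} {x₀ d a : ℝ} (hd : HasDerivAt f d x₀) (ha : a < x₀)
    (hmax : ∀ x ∈ Set.Ioo a x₀, f x ≤ f x₀) : 0 ≤ d := by
  have hs : Tendsto (slope f x₀) (𝓝[<] x₀) (𝓝 d) :=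
    (hasDerivAt_iff_tendsto_slope.1 hd).mono_left
      (nhdsWithin_mono _ (fun y hy => ne_of_lt hy))
  refine ge_of_tendsto hs ?_
  filter_upwards [Ioo_mem_nhdsLT_of_mem ⟨ha, le_refl x₀⟩] with y hy
  rw [slope_def_field]
  have h1 : f y - f x₀ ≤ 0 := sub_nonpos.2 (hmax y hy)
  have h2 : y - x₀ < 0 := sub_neg.2 hy.2
  exact div_nonneg_of_nonpos h1 h2.le

lemma sdt {f f' : ℝ → ℝ} {x₀ d : ℝ} (hf : ∀ᶠ x in 𝓝 x₀, HasDerivAt f (f' x) x)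
    (hd : HasDerivAt f' d x₀) (hmax : IsLocalMax f x₀) : d ≤ 0 ∧ f' x₀ = 0 := by
  have hf0 : f' x₀ = 0 := by
    have := hmax.deriv_eq_zero
    rwa [hf.self_of_nhds.deriv] at this
  refine ⟨?_, hf0⟩
  by_contra hdpos
  push_neg at hdpos
  have hs : Tendsto (slope f' x₀) (𝓝[>] x₀) (𝓝 d) :=
    (hasDerivAt_iff_tendsto_slope.1 hd).mono_left
      (nhdsWithin_mono _ (fun y hy => ne_of_gt hy))
  have hpos : ∀ᶠ y in 𝓝[>] x₀, 0 < f' y := by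
    filter_upwards [hs.eventually (eventually_gt_nhds hdpos), self_mem_nhdsWithin] with y hy hy'
    rw [slope_def_field, hf0, sub_zero] at hy
    have := mul_pos hy (sub_pos.2 (Set.mem_Ioi.1 hy'))
    rwa [div_mul_cancel₀] at this
    exact sub_ne_zero.2 (ne_of_gt hy')
  rcases (nhdsGT_basis x₀).eventually_iff.1 hpos with ⟨b, hb, hball⟩
  rcases eventually_nhds_iff.1 (hf.and hmax) with ⟨U, hU, hUopen, hUx⟩
  rcases Metric.isOpen_iff.1 hUopen x₀ hUx with ⟨ε, hε, hball2⟩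
  set c := min b (x₀ + ε) with hc
  have hxc : x₀ < c := lt_min hb (by linarith)
  set y := (x₀ + c)/2 with hyd
  have hxy : x₀ < y := by simp only [hyd]; linarith
  have hyc : y < c := by simp only [hyd]; linarith
  have hIccU : Set.Icc x₀ y ⊆ U := by
    intro x hx
    apply hball2
    rw [Metric.mem_ball, Real.dist_eq, abs_of_nonneg (sub_nonneg.2 hx.1)]
    have : y < x₀ + ε := lt_of_lt_of_le hyc (min_le_right _ _)
    linarith [hx.2]
  have hderiv : ∀ x ∈ Set.Icc x₀ y, HasDerivAt f (f' x) x := fun x hx => (hU x (hIccU hx)).1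
  have hmono : StrictMonoOn f (Set.Icc x₀ y) := by
    apply strictMonoOn_of_deriv_pos (convex_Icc _ _)
    · exact fun x hx => ((hderiv x hx).differentiableAt).continuousAt.continuousWithinAt
    · intro x hx
      rw [interior_Icc] at hx
      rw [(hderiv x ⟨hx.1.le, hx.2.le⟩).deriv]
      exact hball ⟨hx.1, lt_of_lt_of_le (lt_of_lt_of_le hx.2 hyc.le) (min_le_left _ _)⟩
  have h1 : f x₀ < f y := hmono (Set.left_mem_Icc.2 hxy.le) (Set.right_mem_Icc.2 hxy.le) hxy
  have h2 : f y ≤ f x₀ := (hU y (hIccU (Set.right_mem_Icc.2 hxy.le))).2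
  linarith

lemma maxprin (S : ℝ) (hS : 0 < S) (h : ℝ → ℝ → ℝ)
    (hsmooth : ContDiffOn ℝ (⊤ : ℕ∞) (fun q : ℝ × ℝ => h q.1 q.2)
      (Set.Ioi (0:ℝ) ×ˢ Set.Icc (-S) (0:ℝ)))
    (heq : ∀ ξ > (0:ℝ), ∀ s ∈ Set.Icc (-S) (0:ℝ),
      deriv (fun σ => h ξ σ) s
        = (1 / 2) * deriv (deriv (fun y => h y s)) ξ
          + (3 / ξ) * deriv (fun y => h y s) ξ + (3 / ξ ^ 2) * h ξ s)
    (hinit : ∀ ξ > (0:ℝ), h ξ (-S) = 0)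
    (a b sT B : ℝ) (ha : 0 < a) (hab : a < b) (hsT1 : -S < sT) (hsT2 : sT < 0) (hB : 0 < B)
    (hbdry : ∀ s ∈ Set.Icc (-S) sT,
      h a s * Real.exp (-s) / Phi a ≤ B ∧ h b s * Real.exp (-s) / Phi b ≤ B) :
    ∀ ξ ∈ Set.Icc a b, ∀ s ∈ Set.Icc (-S) sT, h ξ s * Real.exp (-s) / Phi ξ ≤ B := by
  set u : ℝ × ℝ → ℝ := fun q => h q.1 q.2 * Real.exp (-q.2) / Phi q.1 with hu
  set K : Set (ℝ × ℝ) := Set.Icc a b ×ˢ Set.Icc (-S) sT with hK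
  have hKsub : K ⊆ Set.Ioi (0:ℝ) ×ˢ Set.Icc (-S) (0:ℝ) := by
    rintro ⟨x, s⟩ ⟨hx, hs⟩
    exact ⟨lt_of_lt_of_le ha hx.1, hs.1, hs.2.trans hsT2.le⟩
  have hKc : IsCompact K := isCompact_Icc.prod isCompact_Icc
  have hKne : K.Nonempty := ⟨(a, -S), ⟨⟨le_refl a, hab.le⟩, ⟨le_refl _, hsT1.le⟩⟩⟩
  have hPhipos : ∀ q ∈ K, 0 < Phi q.1 := fun q hq =>
    Phi_pos (lt_of_lt_of_le ha (Set.mem_prod.1 hq).1.1)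
  have hcont : ContinuousOn u K := by
    apply ContinuousOn.div
    · exact ((hsmooth.continuousOn.mono hKsub).mul
        ((Real.continuous_exp.comp continuous_snd.neg).continuousOn))
    · have hg : ContinuousOn Phi (Set.Ioi (0:ℝ)) := fun x hx =>
        (hasDerivAt_Phi (ne_of_gt hx)).continuousAt.continuousWithinAt
      exact hg.comp continuous_fst.continuousOn (fun q hq => (hKsub hq).1)
    · exact fun q hq => (hPhipos q hq).ne'
  obtain ⟨⟨ξ₀, s₀⟩, hpK, hpmax⟩ := hKc.exists_isMaxOn hKne hcont
  suffices hM : u (ξ₀, s₀) ≤ B by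
    intro ξ hξ s hs
    exact le_trans (hpmax (Set.mk_mem_prod hξ hs)) hM
  by_contra hMB
  push_neg at hMB
  obtain ⟨hpξ, hps⟩ := Set.mem_prod.1 hpK
  -- strict interiority
  have hξ₀pos : 0 < ξ₀ := lt_of_lt_of_le ha hpξ.1
  have hs₀mem : s₀ ∈ Set.Icc (-S) (0:ℝ) := ⟨hps.1, hps.2.trans hsT2.le⟩
  have hξa : a < ξ₀ := by
    rcases eq_or_lt_of_le hpξ.1 with heqa | h'
    · exfalso
      have := (hbdry s₀ hps).1
      rw [heqa] at this
      exact absurd this (not_le.2 hMB)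
    · exact h'
  have hξb : ξ₀ < b := by
    rcases eq_or_lt_of_le hpξ.2 with heqb | h'
    · exfalso
      have := (hbdry s₀ hps).2
      rw [← heqb] at this
      exact absurd this (not_le.2 hMB)
    · exact h'
  have hs₀S : -S < s₀ := by
    rcases eq_or_lt_of_le hps.1 with heqS | h'
    · exfalso
      have : u (ξ₀, s₀) = 0 := by
        simp only [hu]
        rw [show s₀ = -S from heqS.symm, hinit ξ₀ hξ₀pos]
        simp
      rw [this] at hMB
      exact absurd hB (not_lt.2 hMB.le)
    · exact h'
  -- abbreviations
  set ψ : ℝ → ℝ := fun y => h y s₀ with hψdef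
  have hPhi₀ : 0 < Phi ξ₀ := Phi_pos hξ₀pos
  have hexp₀ : 0 < Real.exp (-s₀) := Real.exp_pos _
  have hh₀pos : 0 < ψ ξ₀ := by
    have h1 : 0 < u (ξ₀, s₀) := hB.trans hMB
    simp only [hu] at h1
    by_contra hle
    push_neg at hle
    have h4 : h ξ₀ s₀ * Real.exp (-s₀) / Phi ξ₀ ≤ 0 :=
      div_nonpos_iff.2 (Or.inr ⟨mul_nonpos_iff.2 (Or.inr ⟨hle, hexp₀.le⟩), hPhi₀.le⟩)
    linarith
  -- time derivative at the max point
  have hCDA : ContDiffAt ℝ (⊤ : ℕ∞) (fun q : ℝ × ℝ => h q.1 q.2) (ξ₀, s₀) := by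
    apply hsmooth.contDiffAt
    have hopen : IsOpen (Set.Ioi (0:ℝ) ×ˢ Set.Ioo (-S) (0:ℝ)) := isOpen_Ioi.prod isOpen_Ioo
    have hmemopen : (ξ₀, s₀) ∈ Set.Ioi (0:ℝ) ×ˢ Set.Ioo (-S) (0:ℝ) :=
      ⟨hξ₀pos, hs₀S, lt_of_le_of_lt hps.2 hsT2⟩
    exact Filter.mem_of_superset (hopen.mem_nhds hmemopen)
      (Set.prod_mono le_rfl Set.Ioo_subset_Icc_self)
  have hdiffs : DifferentiableAt ℝ (fun s => h ξ₀ s) s₀ :=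
    (hCDA.differentiableAt (by simp)).comp s₀ ((differentiableAt_const ξ₀).prodMk differentiableAt_id)
  have hds : HasDerivAt (fun s => h ξ₀ s) (deriv (fun σ => h ξ₀ σ) s₀) s₀ := hdiffs.hasDerivAt
  have hexpd : HasDerivAt (fun s : ℝ => Real.exp (-s)) (-Real.exp (-s₀)) s₀ := by
    exact ((Real.hasDerivAt_exp (-s₀)).comp s₀ (hasDerivAt_neg s₀)).congr_deriv (by ring)
  have hq : HasDerivAt (fun s => h ξ₀ s * Real.exp (-s) / Phi ξ₀)
      ((deriv (fun σ => h ξ₀ σ) s₀ * Real.exp (-s₀) + h ξ₀ s₀ * (-Real.exp (-s₀))) / Phi ξ₀)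
      s₀ := (hds.mul hexpd).div_const _
  have hDsge : h ξ₀ s₀ ≤ deriv (fun σ => h ξ₀ σ) s₀ := by
    have h0 : 0 ≤ (deriv (fun σ => h ξ₀ σ) s₀ * Real.exp (-s₀) +
        h ξ₀ s₀ * (-Real.exp (-s₀))) / Phi ξ₀ := by
      refine left_deriv_nonneg hq hs₀S ?_
      intro x hx
      have hxK : (ξ₀, x) ∈ K := ⟨hpξ, ⟨hx.1.le, hx.2.le.trans hps.2⟩⟩
      exact hpmax hxK
    have h1 : (0:ℝ) * Phi ξ₀ ≤ deriv (fun σ => h ξ₀ σ) s₀ * Real.exp (-s₀) +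
        h ξ₀ s₀ * (-Real.exp (-s₀)) := (le_div_iff₀ hPhi₀).1 h0
    nlinarith [hexp₀]
  -- spatial derivatives at the max point
  have hψsm : ContDiffOn ℝ (⊤ : ℕ∞) ψ (Set.Ioi 0) := by
    have hmap : Set.MapsTo (fun y : ℝ => ((y, s₀) : ℝ × ℝ)) (Set.Ioi 0)
        (Set.Ioi (0:ℝ) ×ˢ Set.Icc (-S) (0:ℝ)) := fun y hy => ⟨hy, hs₀mem⟩
    exact hsmooth.comp ((contDiff_id.prodMk contDiff_const).contDiffOn) hmap
  have hFsm : ContDiffOn ℝ (⊤ : ℕ∞) (deriv ψ) (Set.Ioi 0) := hψsm.deriv_of_isOpen isOpen_Ioi (by simp)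
  have hψd : ∀ x ∈ Set.Ioi (0:ℝ), HasDerivAt ψ (deriv ψ x) x := fun x hx =>
    ((hψsm.contDiffAt (isOpen_Ioi.mem_nhds hx)).differentiableAt (by simp)).hasDerivAt
  have hFd : ∀ x ∈ Set.Ioi (0:ℝ), HasDerivAt (deriv ψ) (deriv (deriv ψ) x) x := fun x hx =>
    ((hFsm.contDiffAt (isOpen_Ioi.mem_nhds hx)).differentiableAt (by simp)).hasDerivAt
  set P : ℝ → ℝ := fun x => ψ x * Real.exp (-s₀) / Phi x with hPdef
  set P' : ℝ → ℝ := fun x =>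
    ((deriv ψ x * Phi x - ψ x * Phi' x) * Real.exp (-s₀)) / (Phi x)^2 with hP'def
  have hPd : ∀ x ∈ Set.Ioi (0:ℝ), HasDerivAt P (P' x) x := by
    intro x hx
    have h1 := ((hψd x hx).mul_const (Real.exp (-s₀))).div (hasDerivAt_Phi (ne_of_gt hx))
      (Phi_pos hx).ne'
    have h2 : (deriv ψ x * Real.exp (-s₀) * Phi x - ψ x * Real.exp (-s₀) * Phi' x) / Phi x ^ 2
        = P' x := by rw [hP'def]; ring_nf
    rw [h2] at h1
    exact h1
  have hNd : HasDerivAt (fun x => (deriv ψ x * Phi x - ψ x * Phi' x) * Real.exp (-s₀))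
      (((deriv (deriv ψ) ξ₀ * Phi ξ₀ + deriv ψ ξ₀ * Phi' ξ₀)
        - (deriv ψ ξ₀ * Phi' ξ₀ + ψ ξ₀ * Phi'' ξ₀)) * Real.exp (-s₀)) ξ₀ :=
    (((hFd ξ₀ hξ₀pos).mul (hasDerivAt_Phi hξ₀pos.ne')).sub
      ((hψd ξ₀ hξ₀pos).mul (hasDerivAt_Phi' hξ₀pos.ne'))).mul_const _
  have hDend : HasDerivAt (fun x => (Phi x)^2) ((2:ℕ) * Phi ξ₀ ^ 1 * Phi' ξ₀) ξ₀ :=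
    (hasDerivAt_Phi hξ₀pos.ne').pow 2
  have hP'd : HasDerivAt P'
      (((((deriv (deriv ψ) ξ₀ * Phi ξ₀ + deriv ψ ξ₀ * Phi' ξ₀)
        - (deriv ψ ξ₀ * Phi' ξ₀ + ψ ξ₀ * Phi'' ξ₀)) * Real.exp (-s₀)) * (Phi ξ₀)^2
        - ((deriv ψ ξ₀ * Phi ξ₀ - ψ ξ₀ * Phi' ξ₀) * Real.exp (-s₀))
          * ((2:ℕ) * Phi ξ₀ ^ 1 * Phi' ξ₀)) / ((Phi ξ₀)^2)^2) ξ₀ :=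
    hNd.div hDend (pow_ne_zero 2 hPhi₀.ne')
  have hmaxP : IsLocalMax P ξ₀ := by
    have hnb : Set.Ioo a b ∈ 𝓝 ξ₀ := isOpen_Ioo.mem_nhds ⟨hξa, hξb⟩
    filter_upwards [hnb] with x hx
    have hxK : (x, s₀) ∈ K := ⟨⟨hx.1.le, hx.2.le⟩, hps⟩
    exact hpmax hxK
  have hev : ∀ᶠ x in 𝓝 ξ₀, HasDerivAt P (P' x) x := by
    filter_upwards [isOpen_Ioi.mem_nhds hξ₀pos] with x hx using hPd x hx
  obtain ⟨hQ, hP'0⟩ := sdt hev hP'd hmaxP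
  -- first derivative vanishes
  have hD1 : deriv ψ ξ₀ * Phi ξ₀ - ψ ξ₀ * Phi' ξ₀ = 0 := by
    rw [hP'def] at hP'0
    have h1 := div_eq_zero_iff.1 hP'0
    rcases h1 with h1 | h1
    · rcases mul_eq_zero.1 h1 with h2 | h2
      · exact h2
      · exact absurd h2 hexp₀.ne'
    · exact absurd h1 (pow_ne_zero 2 hPhi₀.ne')
  -- second derivative bound
  have hD2 : deriv (deriv ψ) ξ₀ * Phi ξ₀ ≤ ψ ξ₀ * Phi'' ξ₀ := by
    have hpos4 : (0:ℝ) < ((Phi ξ₀)^2)^2 := by positivity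
    set X := ((((deriv (deriv ψ) ξ₀ * Phi ξ₀ + deriv ψ ξ₀ * Phi' ξ₀)
        - (deriv ψ ξ₀ * Phi' ξ₀ + ψ ξ₀ * Phi'' ξ₀)) * Real.exp (-s₀)) * (Phi ξ₀)^2
        - ((deriv ψ ξ₀ * Phi ξ₀ - ψ ξ₀ * Phi' ξ₀) * Real.exp (-s₀))
          * ((2:ℕ) * Phi ξ₀ ^ 1 * Phi' ξ₀)) with hX
    have h6 : X ≤ 0 := by
      have h7 : X = (X / ((Phi ξ₀)^2)^2) * ((Phi ξ₀)^2)^2 := by field_simp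
      rw [h7]
      exact mul_nonpos_iff.2 (Or.inr ⟨hQ, hpos4.le⟩)
    rw [hX, hD1] at h6
    simp only [zero_mul, mul_zero, sub_zero, zero_sub, pow_one] at h6
    nlinarith [mul_pos hexp₀ (pow_pos hPhi₀ 2)]
  -- the PDE at the max point
  have hpde : deriv (fun σ => h ξ₀ σ) s₀
      = (1/2) * deriv (deriv ψ) ξ₀ + (3/ξ₀) * deriv ψ ξ₀ + (3/ξ₀^2) * ψ ξ₀ :=
    heq ξ₀ hξ₀pos s₀ hs₀mem
  have hkey := Phi_key hξ₀pos
  have e1 : deriv (fun σ => h ξ₀ σ) s₀ * Phi ξ₀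
      = (1/2) * (deriv (deriv ψ) ξ₀ * Phi ξ₀) + (3/ξ₀) * (deriv ψ ξ₀ * Phi ξ₀)
        + (3/ξ₀^2) * (ψ ξ₀ * Phi ξ₀) := by rw [hpde]; ring
  have hD1' : deriv ψ ξ₀ * Phi ξ₀ = ψ ξ₀ * Phi' ξ₀ := by linarith
  rw [hD1'] at e1
  have hξpos3 : 0 < 3/ξ₀ := by positivity
  have e2 : deriv (fun σ => h ξ₀ σ) s₀ * Phi ξ₀
      ≤ (1/2) * (ψ ξ₀ * Phi'' ξ₀) + (3/ξ₀) * (ψ ξ₀ * Phi' ξ₀)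
        + (3/ξ₀^2) * (ψ ξ₀ * Phi ξ₀) := by rw [e1]; linarith
  have e3 : (1/2) * (ψ ξ₀ * Phi'' ξ₀) + (3/ξ₀) * (ψ ξ₀ * Phi' ξ₀)
        + (3/ξ₀^2) * (ψ ξ₀ * Phi ξ₀)
      = ψ ξ₀ * ((1/2) * Phi'' ξ₀ + (3/ξ₀) * Phi' ξ₀ + (3/ξ₀^2) * Phi ξ₀) := by ring
  rw [e3, hkey, mul_zero] at e2
  have e5 : 0 < deriv (fun σ => h ξ₀ σ) s₀ * Phi ξ₀ :=
    mul_pos (lt_of_lt_of_le hh₀pos hDsge) hPhi₀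
  linarith


lemma Phi_ge3 {c : ℝ} (hc : 0 < c) : c ^ (-(3:ℝ)) ≤ Phi c := by
  rw [show (-(3:ℝ)) = ((-3:ℤ):ℝ) by norm_num, Real.rpow_intCast]
  unfold Phi
  have : (0:ℝ) < c ^ (-2:ℤ) := zpow_pos hc _
  linarith

lemma Phi_ge2 {c : ℝ} (hc : 0 < c) : c ^ (-(2:ℝ)) ≤ Phi c := by
  rw [show (-(2:ℝ)) = ((-2:ℤ):ℝ) by norm_num, Real.rpow_intCast]
  unfold Phi
  have : (0:ℝ) < c ^ (-3:ℤ) := zpow_pos hc _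
  linarith

lemma bdry_est (m S : ℝ) (hS : 0 < S) {c s : ℝ} (hc : 0 < c)
    (hs1 : -S ≤ s) (hs2 : s ≤ 0) {H : ℝ} (hH : |H| ≤ c ^ (-m)) {k : ℝ}
    (hk : c ^ (-k) ≤ Phi c) :
    H * Real.exp (-s) / Phi c ≤ Real.exp S * c ^ (k - m) := by
  have hPhic := Phi_pos hc
  have hnum : H * Real.exp (-s) ≤ c ^ (-m) * Real.exp S := by
    calc H * Real.exp (-s) ≤ |H| * Real.exp (-s) :=
        mul_le_mul_of_nonneg_right (le_abs_self H) (Real.exp_pos _).le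
      _ ≤ c ^ (-m) * Real.exp S :=
        mul_le_mul hH (Real.exp_le_exp.2 (by linarith)) (Real.exp_pos _).le
          (Real.rpow_nonneg hc.le _)
  calc H * Real.exp (-s) / Phi c ≤ (c ^ (-m) * Real.exp S) / (c ^ (-k)) :=
      div_le_div₀ (by positivity) hnum (Real.rpow_pos_of_pos hc _) hk
    _ = Real.exp S * c ^ (k - m) := by
      rw [show (k - m) = (-m) - (-k) by ring, Real.rpow_sub hc]
      ring

lemma aux (m : ℝ) (hm : m ∈ Set.Ioo (2:ℝ) 3) (S : ℝ) (hS : 0 < S)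
    (h : ℝ → ℝ → ℝ)
    (hsmooth : ContDiffOn ℝ (⊤ : ℕ∞) (fun q : ℝ × ℝ => h q.1 q.2)
      (Set.Ioi (0:ℝ) ×ˢ Set.Icc (-S) (0:ℝ)))
    (heq : ∀ ξ > (0:ℝ), ∀ s ∈ Set.Icc (-S) (0:ℝ),
      deriv (fun σ => h ξ σ) s
        = (1 / 2) * deriv (deriv (fun y => h y s)) ξ
          + (3 / ξ) * deriv (fun y => h y s) ξ + (3 / ξ ^ 2) * h ξ s)
    (hbd : ∀ ξ > (0:ℝ), ∀ s ∈ Set.Icc (-S) (0:ℝ), |h ξ s| ≤ ξ ^ (-m))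
    (hinit : ∀ ξ > (0:ℝ), h ξ (-S) = 0) :
    ∀ ξ > (0:ℝ), ∀ s ∈ Set.Icc (-S) (0:ℝ), h ξ s ≤ 0 := by
  obtain ⟨hm2, hm3⟩ := hm
  have main : ∀ ξ > (0:ℝ), ∀ s ∈ Set.Ioo (-S) (0:ℝ), h ξ s ≤ 0 := by
    intro ξ hξ s hs
    have claim : ∀ ε > (0:ℝ), h ξ s ≤ ε := by
      intro ε hε
      have hPhiξ : 0 < Phi ξ := Phi_pos hξ
      have hexps : 0 < Real.exp (-s) := Real.exp_pos _
      set δ : ℝ := ε * Real.exp (-s) / Phi ξ with hδdef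
      have hδ : 0 < δ := by positivity
      set δ' : ℝ := δ / Real.exp S with hδ'def
      have hδ' : 0 < δ' := by positivity
      set a : ℝ := min ξ (δ' ^ ((3-m)⁻¹)) with hadef
      set b : ℝ := max (ξ+1) ((1/δ') ^ ((m-2)⁻¹)) with hbdef
      have ha : 0 < a := lt_min hξ (Real.rpow_pos_of_pos hδ' _)
      have haξ : a ≤ ξ := min_le_left _ _
      have hbξ : ξ ≤ b := le_trans (by linarith) (le_max_left _ _)
      have hbpos : 0 < b := lt_of_lt_of_le (by linarith) (le_max_left _ _)
      have hab : a < b := lt_of_le_of_lt haξ (lt_of_lt_of_le (lt_add_one ξ) (le_max_left _ _))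
      have hA : a ^ (3-m) ≤ δ' := by
        calc a ^ (3-m) ≤ (δ' ^ ((3-m)⁻¹)) ^ (3-m) :=
            Real.rpow_le_rpow ha.le (min_le_right _ _) (by linarith)
          _ = δ' := by
            rw [← Real.rpow_mul hδ'.le, inv_mul_cancel₀ (by linarith : (3:ℝ)-m ≠ 0),
              Real.rpow_one]
      have hBb : b ^ (2-m) ≤ δ' := by
        have h1 : (1/δ') ^ ((m-2)⁻¹) ≤ b := le_max_right _ _
        have h2 : 1/δ' ≤ b ^ (m-2) := by
          have e1 : 1/δ' = ((1/δ') ^ ((m-2)⁻¹)) ^ (m-2) := by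
            rw [← Real.rpow_mul (by positivity), inv_mul_cancel₀ (by linarith : m-2 ≠ 0),
              Real.rpow_one]
          rw [e1]
          exact Real.rpow_le_rpow (by positivity) h1 (by linarith)
        have h3 : b ^ (2-m) = (b ^ (m-2))⁻¹ := by
          rw [show (2-m) = -(m-2) by ring, Real.rpow_neg hbpos.le]
        rw [h3]
        have e2 : (b ^ (m-2))⁻¹ ≤ (1/δ')⁻¹ := inv_anti₀ (by positivity) h2
        simpa using e2
      set B : ℝ := max (Real.exp S * a ^ (3-m)) (Real.exp S * b ^ (2-m)) with hBdef
      have hBpos : 0 < B := lt_of_lt_of_le (by positivity) (le_max_left _ _)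
      have hbdry : ∀ s' ∈ Set.Icc (-S) s,
          h a s' * Real.exp (-s') / Phi a ≤ B ∧ h b s' * Real.exp (-s') / Phi b ≤ B := by
        intro s' hs'
        have hs'mem : s' ∈ Set.Icc (-S) (0:ℝ) := ⟨hs'.1, hs'.2.trans hs.2.le⟩
        constructor
        · exact le_trans (bdry_est m S hS ha hs'.1 (hs'.2.trans hs.2.le)
            (hbd a ha s' hs'mem) (Phi_ge3 ha)) (le_max_left _ _)
        · exact le_trans (bdry_est m S hS hbpos hs'.1 (hs'.2.trans hs.2.le)
            (hbd b hbpos s' hs'mem) (Phi_ge2 hbpos)) (le_max_right _ _)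
      have hfin := maxprin S hS h hsmooth heq hinit a b s B ha hab hs.1 hs.2 hBpos hbdry
        ξ ⟨haξ, hbξ⟩ s ⟨hs.1.le, le_refl s⟩
      have hBδ : B ≤ δ := by
        apply max_le
        · calc Real.exp S * a ^ (3-m) ≤ Real.exp S * δ' :=
              mul_le_mul_of_nonneg_left hA (Real.exp_pos _).le
            _ = δ := by rw [hδ'def]; field_simp
        · calc Real.exp S * b ^ (2-m) ≤ Real.exp S * δ' :=
              mul_le_mul_of_nonneg_left hBb (Real.exp_pos _).le
            _ = δ := by rw [hδ'def]; field_simp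
      have h9 : h ξ s * (Real.exp (-s) / Phi ξ) ≤ ε * (Real.exp (-s) / Phi ξ) := by
        calc h ξ s * (Real.exp (-s) / Phi ξ) = h ξ s * Real.exp (-s) / Phi ξ := by ring
          _ ≤ B := hfin
          _ ≤ δ := hBδ
          _ = ε * (Real.exp (-s) / Phi ξ) := by rw [hδdef]; ring
      exact le_of_mul_le_mul_right h9 (by positivity)
    by_contra hpos0
    push_neg at hpos0
    have := claim (h ξ s / 2) (by linarith)
    linarith
  intro ξ hξ s hs
  rcases eq_or_lt_of_le hs.1 with hsS | hsS
  · rw [← hsS]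
    exact (hinit ξ hξ).le
  rcases lt_or_eq_of_le hs.2 with hs0 | hs0
  · exact main ξ hξ s ⟨hsS, hs0⟩
  · -- s = 0 : limit from the left
    subst hs0
    have hcw : ContinuousWithinAt (fun s' => h ξ s') (Set.Ioo (-S) (0:ℝ)) 0 := by
      have h1 : ContinuousWithinAt (fun q : ℝ × ℝ => h q.1 q.2)
          (Set.Ioi (0:ℝ) ×ˢ Set.Icc (-S) (0:ℝ)) (ξ, 0) :=
        hsmooth.continuousOn _ ⟨hξ, ⟨hsS.le, le_refl (0:ℝ)⟩⟩
      have h2 : ContinuousWithinAt (fun s' : ℝ => ((ξ, s') : ℝ × ℝ)) (Set.Ioo (-S) (0:ℝ)) 0 :=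
        (Continuous.continuousWithinAt (by continuity))
      exact h1.comp h2 (fun s' hs' => ⟨hξ, hs'.1.le, hs'.2.le⟩)
    have hne : (𝓝[Set.Ioo (-S) (0:ℝ)] (0:ℝ)).NeBot := by
      apply mem_closure_iff_nhdsWithin_neBot.1
      rw [closure_Ioo (by linarith : -S ≠ (0:ℝ))]
      exact ⟨by linarith, le_refl (0:ℝ)⟩
    refine le_of_tendsto hcw ?_
    filter_upwards [self_mem_nhdsWithin] with s' hs' using main ξ hξ s' hs'


/-- Uniqueness for the blow-up limit equation `h_s = ½ h_ξξ + (3/ξ) h_ξ + (3/ξ²) h`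
on a finite time interval `[-S,0]`: a solution with `|h(ξ,s)| ≤ ξ^{-m}` (`2 < m < 3`)
which vanishes at the initial time `s = -S` vanishes identically. -/
theorem stmt_18 (m : ℝ) (hm : m ∈ Set.Ioo (2:ℝ) 3) (S : ℝ) (hS : 0 < S)
    (h : ℝ → ℝ → ℝ)
    (hsmooth : ContDiffOn ℝ (⊤ : ℕ∞) (fun q : ℝ × ℝ => h q.1 q.2)
      (Set.Ioi (0:ℝ) ×ˢ Set.Icc (-S) (0:ℝ)))
    (heq : ∀ ξ > (0:ℝ), ∀ s ∈ Set.Icc (-S) (0:ℝ),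
      deriv (fun σ => h ξ σ) s
        = (1 / 2) * deriv (deriv (fun y => h y s)) ξ
          + (3 / ξ) * deriv (fun y => h y s) ξ + (3 / ξ ^ 2) * h ξ s)
    (hbd : ∀ ξ > (0:ℝ), ∀ s ∈ Set.Icc (-S) (0:ℝ), |h ξ s| ≤ ξ ^ (-m))
    (hinit : ∀ ξ > (0:ℝ), h ξ (-S) = 0) :
    ∀ ξ > (0:ℝ), ∀ s ∈ Set.Icc (-S) (0:ℝ), h ξ s = 0 := by
  intro ξ hξ s hs
  have h1 := aux m hm S hS h hsmooth heq hbd hinit ξ hξ s hs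
  have heq' : ∀ ξ' > (0:ℝ), ∀ s' ∈ Set.Icc (-S) (0:ℝ),
      deriv (fun σ => -h ξ' σ) s'
        = (1 / 2) * deriv (deriv (fun y => -h y s')) ξ'
          + (3 / ξ') * deriv (fun y => -h y s') ξ' + (3 / ξ' ^ 2) * (-h ξ' s') := by
    intro ξ' hξ' s' hs'
    have e1 : deriv (fun σ => -h ξ' σ) s' = -deriv (fun σ => h ξ' σ) s' := deriv.neg
    have e2 : deriv (fun y => -h y s') = fun x => -(deriv (fun y => h y s') x) :=
      funext (fun x => deriv.neg)
    have e3 : deriv (deriv (fun y => -h y s')) ξ' = -deriv (deriv (fun y => h y s')) ξ' := by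
      rw [e2]
      exact deriv.neg
    rw [e1, e3, e2]
    have hpde := heq ξ' hξ' s' hs'
    linear_combination (-1 : ℝ) * hpde
  have h2 := aux m hm S hS (fun x t => -h x t) hsmooth.neg heq'
    (fun ξ' hξ' s' hs' => by
      show |-h ξ' s'| ≤ ξ' ^ (-m)
      rw [abs_neg]; exact hbd ξ' hξ' s' hs')
    (fun ξ' hξ' => by
      show -h ξ' (-S) = 0
      rw [hinit ξ' hξ', neg_zero]) ξ hξ s hs
  simp only [neg_nonpos] at h2
  linarith
end
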